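/- For every n ∈ ℕ, all nonzero complex r, s and all complex a, b with as ≠ q^n br, one has ∑_{k=0}^n [n choose k]_q q^{k(k−1)/2} a^{n−k} b^k · ([n−k]_q!/(q^{(n−k)(n−k+1)/2} r^{n−k+1})) · ([k]_q!/s^{k+1}) = (q^{−n(n+1)/2} [n]_q!/(as − q^n br)) · ((a/r)^{n+1} − (q^n b/s)^{n+1}). -/

import Mathlib

open Finset

/-- The q-number `[n]_q = (1 - q^n)/(1 - q)`. -/
noncomputable def qNum (q : ℝ) (n : ℕ) : ℝ := (1 - q ^ n) / (1 - q)

/-- The q-factorial `[n]_q! = ∏_{k=1}^n [k]_q`. -/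
noncomputable def qFact (q : ℝ) (n : ℕ) : ℝ := ∏ k ∈ Finset.range n, qNum q (k + 1)

/-- The q-binomial coefficient `[n choose k]_q`. -/
noncomputable def qBinom (q : ℝ) (n k : ℕ) : ℝ := qFact q n / (qFact q k * qFact q (n - k))

/-!
Put `X = a / r` and `Y = q^n b / s`. Cancelling the q-factorials against the q-binomial
coefficient and using `k(k-1)/2 + n(n+1)/2 = nk + (n-k)(n-k+1)/2`, the `k`-th summand becomes
`[n]_q! / (q^(n(n+1)/2) r s) · Y^k X^(n-k)`, so the sum is a finite geometric sum equal to
`(X^(n+1) - Y^(n+1)) / (X - Y)`; the hypothesis `a s ≠ q^n b r` says precisely `X ≠ Y`.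
-/

theorem qNum_pos {q : ℝ} (hq : -1 < q) (hq1 : q ≠ 1) {n : ℕ} (hn : n ≠ 0) : 0 < qNum q n := by
  have hsum : qNum q n = ∑ i ∈ range n, q ^ i := by
    rw [geom_sum_eq hq1, qNum, ← neg_div_neg_eq, neg_sub, neg_sub]
  rw [hsum]
  exact geom_sum_pos' (by linarith) hn

theorem qFact_pos {q : ℝ} (hq : -1 < q) (hq1 : q ≠ 1) (n : ℕ) : 0 < qFact q n :=
  prod_pos fun k _ ↦ qNum_pos hq hq1 k.succ_ne_zero

theorem qBinom_add_mul_qFact_mul_qFact {q : ℝ} {k m : ℕ} (hk : qFact q k ≠ 0)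
    (hm : qFact q m ≠ 0) : qBinom q (k + m) k * (qFact q k * qFact q m) = qFact q (k + m) := by
  rw [qBinom, Nat.add_sub_cancel_left]
  exact div_mul_cancel₀ _ (mul_ne_zero hk hm)

theorem triangle_add_triangle (k m : ℕ) :
    k * (k - 1) / 2 + (k + m) * (k + m + 1) / 2 = (k + m) * k + m * (m + 1) / 2 := by
  rcases k with _ | j
  · simp
  obtain ⟨c₁, hc₁⟩ := Nat.even_mul_succ_self j
  obtain ⟨c₂, hc₂⟩ := Nat.even_mul_succ_self (j + 1 + m)
  obtain ⟨c₃, hc₃⟩ := Nat.even_mul_succ_self m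
  have key : j * (j + 1) + (j + 1 + m) * (j + 1 + m + 1) =
      2 * ((j + 1 + m) * (j + 1)) + m * (m + 1) := by ring
  rw [Nat.add_sub_cancel, mul_comm (j + 1) j]
  omega

theorem qBinom_summand_eq_mul_pow_mul_pow {q : ℝ} (hq : (q : ℂ) ≠ 0) {r s a b : ℂ}
    (hr : r ≠ 0) (hs : s ≠ 0) {k m : ℕ} (hk : qFact q k ≠ 0) (hm : qFact q m ≠ 0) :
    (qBinom q (k + m) k : ℂ) * (q : ℂ) ^ (k * (k - 1) / 2) * a ^ m * b ^ k *
        ((qFact q m : ℂ) / ((q : ℂ) ^ (m * (m + 1) / 2) * r ^ (m + 1))) *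
        ((qFact q k : ℂ) / s ^ (k + 1)) =
      qFact q (k + m) / ((q : ℂ) ^ ((k + m) * (k + m + 1) / 2) * r * s) *
        (((q : ℂ) ^ (k + m) * b / s) ^ k * (a / r) ^ m) := by
  have hbinom : (qBinom q (k + m) k : ℂ) * (qFact q k * qFact q m) = qFact q (k + m) := by
    exact_mod_cast qBinom_add_mul_qFact_mul_qFact hk hm
  have hpow : (q : ℂ) ^ (k * (k - 1) / 2) * (q : ℂ) ^ ((k + m) * (k + m + 1) / 2) =
      ((q : ℂ) ^ (k + m)) ^ k * (q : ℂ) ^ (m * (m + 1) / 2) := by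
    rw [← pow_mul, ← pow_add, ← pow_add, triangle_add_triangle]
  rw [div_pow, div_pow, mul_pow, ← hbinom]
  field_simp
  linear_combination
    (qBinom q (k + m) k * a ^ m * b ^ k * qFact q m * qFact q k * r * r ^ m * s * s ^ k : ℂ) * hpow

theorem stmt_17 (q : ℝ) (hq0 : 0 < q) (hq1 : q < 1) (n : ℕ) (r s a b : ℂ)
    (hr : r ≠ 0) (hs : s ≠ 0) (h : a * s ≠ (q : ℂ) ^ n * b * r) :
    ∑ k ∈ Finset.range (n + 1),
        (qBinom q n k : ℂ) * (q : ℂ) ^ (k * (k - 1) / 2) * a ^ (n - k) * b ^ k *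
          ((qFact q (n - k) : ℂ) / ((q : ℂ) ^ ((n - k) * (n - k + 1) / 2) * r ^ (n - k + 1))) *
          ((qFact q k : ℂ) / s ^ (k + 1)) =
      (qFact q n : ℂ) / ((q : ℂ) ^ (n * (n + 1) / 2) * (a * s - (q : ℂ) ^ n * b * r)) *
        ((a / r) ^ (n + 1) - ((q : ℂ) ^ n * b / s) ^ (n + 1)) := by
  have hq : (q : ℂ) ≠ 0 := by exact_mod_cast hq0.ne'
  have hFact (m : ℕ) : qFact q m ≠ 0 := (qFact_pos (by linarith) hq1.ne m).ne'
  set X := a / r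
  set Y := (q : ℂ) ^ n * b / s
  have hYX : Y ≠ X := fun hXY ↦ h ((div_eq_div_iff hs hr).mp hXY).symm
  have hsummand : ∀ k ∈ range (n + 1),
      (qBinom q n k : ℂ) * (q : ℂ) ^ (k * (k - 1) / 2) * a ^ (n - k) * b ^ k *
          ((qFact q (n - k) : ℂ) / ((q : ℂ) ^ ((n - k) * (n - k + 1) / 2) * r ^ (n - k + 1))) *
          ((qFact q k : ℂ) / s ^ (k + 1)) =
        qFact q n / ((q : ℂ) ^ (n * (n + 1) / 2) * r * s) * (Y ^ k * X ^ (n - k)) := by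
    intro k hk
    obtain ⟨m, rfl⟩ := Nat.exists_eq_add_of_le (Nat.lt_succ_iff.mp (mem_range.mp hk))
    simpa only [Nat.add_sub_cancel_left] using
      qBinom_summand_eq_mul_pow_mul_pow hq hr hs (hFact k) (hFact m)
  have hgeom := (Commute.all Y X).geom_sum₂ hYX (n + 1)
  simp only [Nat.add_sub_cancel] at hgeom
  have hden : a * s - (q : ℂ) ^ n * b * r = r * s * (X - Y) := by
    simp only [X, Y]
    field_simp
  rw [sum_congr rfl hsummand, ← mul_sum, hgeom, hden]
  field_simp [sub_ne_zero.mpr hYX, sub_ne_zero.mpr hYX.symm]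
  ring
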